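/- Let μ > 0 and g(t) = t² f'(t) with f(t) = t^{2μ} − t^{2μ+2}, t̄ = √(μ/(μ+1)). If 0 < t₁ < t̄ < t₂ < 1 and f(t₁) = f(t₂), then g²(t₁) < g²(t₂). Consequently the system g(t₁) = −g(t₂), f(t₁) = f(t₂), 0 < t₁ < t̄ < t₂ < 1 has no solution. -/

import Mathlib

/-!
With `f(t) = t^(2μ) - t^(2μ+2)`, `g = t² f'` and `(μ + 1) t̄² = μ`, the function
`Ψ = g² + K f` with `K = 8 μ t̄^(2μ+2)` has derivative
`Ψ' = f' · (2 t² g' + K)`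
`  = (2 (μ+1) t^(2μ) / t) · (8 μ (t̄² - t²)(t̄^(2μ+2) - t^(2μ+2)) + 4 (μ+1)(2μ+3) t^(2μ+2) (t̄² - t²)²)`,
which is positive for `t > 0`, `t ≠ t̄`. So `Ψ` is strictly increasing, and `f(t₁) = f(t₂)` with
`t₁ < t₂` forces `g(t₁)² < g(t₂)²`, which rules out `g(t₁) = -g(t₂)`.
-/

open Real Set

theorem strictMonoOn_Icc_of_hasDerivAt_pos_of_ne {φ φ' : ℝ → ℝ} {a b c : ℝ}
    (hac : a ≤ c) (hcb : c ≤ b) (hφ : ∀ x ∈ Icc a b, HasDerivAt φ (φ' x) x)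
    (hφ' : ∀ x ∈ Icc a b, x ≠ c → 0 < φ' x) : StrictMonoOn φ (Icc a b) := by
  have piece : ∀ a' b', Icc a' b' ⊆ Icc a b → (∀ x ∈ Ioo a' b', x ≠ c) →
      StrictMonoOn φ (Icc a' b') := fun a' b' hsub hne =>
    strictMonoOn_of_deriv_pos (convex_Icc a' b')
      (fun x hx => (hφ x (hsub hx)).continuousAt.continuousWithinAt)
      (fun x hx => by
        rw [interior_Icc] at hx
        rw [(hφ x (hsub (Ioo_subset_Icc_self hx))).deriv]
        exact hφ' x (hsub (Ioo_subset_Icc_self hx)) (hne x hx))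
  rw [← Icc_union_Icc_eq_Icc hac hcb]
  exact (piece a c (Icc_subset_Icc_right hcb) fun x hx => hx.2.ne).union
    (piece c b (Icc_subset_Icc_left hac) fun x hx => hx.1.ne') (isGreatest_Icc hac) (isLeast_Icc hcb)

theorem sq_sub_sq_mul_rpow_sub_rpow_pos {a b p : ℝ} (ha : 0 < a) (hb : 0 < b) (hab : a ≠ b)
    (hp : 0 < p) : 0 < (a ^ 2 - b ^ 2) * (a ^ p - b ^ p) := by
  rcases hab.lt_or_gt with h | h
  · exact mul_pos_of_neg_of_neg (by nlinarith) (sub_neg.2 (rpow_lt_rpow ha.le h hp))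
  · exact mul_pos (by nlinarith) (sub_pos.2 (rpow_lt_rpow hb.le h hp))

namespace PowerProfile

variable {μ x : ℝ}

noncomputable def profile (μ x : ℝ) : ℝ := x ^ (2 * μ) - x ^ (2 * μ + 2)

noncomputable def scaledSlope (μ x : ℝ) : ℝ := 2 * x ^ (2 * μ) * x * (μ - (μ + 1) * x ^ 2)

noncomputable def energy (μ c x : ℝ) : ℝ :=
  scaledSlope μ x ^ 2 + 8 * μ * c ^ (2 * μ + 2) * profile μ x

theorem hasDerivAt_profile (hx : 0 < x) :
    HasDerivAt (profile μ) (2 * x ^ (2 * μ) * (μ - (μ + 1) * x ^ 2) / x) x := by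
  refine ((hasDerivAt_rpow_const (p := 2 * μ) (Or.inl hx.ne')).sub
    (hasDerivAt_rpow_const (p := 2 * μ + 2) (Or.inl hx.ne'))).congr_deriv ?_
  rw [show 2 * μ + 2 - 1 = 2 * μ + 1 by ring, rpow_add hx, rpow_sub_one hx.ne', rpow_one]
  field_simp

theorem sq_mul_deriv_profile (hx : 0 < x) : x ^ 2 * deriv (profile μ) x = scaledSlope μ x := by
  rw [(hasDerivAt_profile hx).deriv, scaledSlope]
  field_simp

theorem hasDerivAt_scaledSlope (hx : 0 < x) :
    HasDerivAt (scaledSlope μ)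
      (2 * x ^ (2 * μ) * (μ * (2 * μ + 1) - (μ + 1) * (2 * μ + 3) * x ^ 2)) x := by
  refine ((((hasDerivAt_rpow_const (p := 2 * μ) (Or.inl hx.ne')).const_mul 2).mul
    (hasDerivAt_id x)).mul (((hasDerivAt_pow 2 x).const_mul (μ + 1)).const_sub μ)).congr_deriv ?_
  simp only [id_eq, Pi.mul_apply, Nat.cast_ofNat, Nat.add_one_sub_one, pow_one]
  rw [rpow_sub_one hx.ne']
  field_simp
  ring

theorem hasDerivAt_energy (μ c : ℝ) (hx : 0 < x) :
    HasDerivAt (energy μ c) (2 * x ^ (2 * μ) * (μ - (μ + 1) * x ^ 2) / x *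
      (4 * x ^ (2 * μ) * x ^ 2 * (μ * (2 * μ + 1) - (μ + 1) * (2 * μ + 3) * x ^ 2)
        + 8 * μ * c ^ (2 * μ + 2))) x := by
  refine (((hasDerivAt_scaledSlope (μ := μ) hx).fun_pow 2).add
    ((hasDerivAt_profile hx).const_mul (8 * μ * c ^ (2 * μ + 2)))).congr_deriv ?_
  simp only [scaledSlope]
  field_simp
  ring

theorem energy_deriv_pos {c : ℝ} (hμ : 0 < μ) (hc : 0 < c) (hcμ : (μ + 1) * c ^ 2 = μ)
    (hx : 0 < x) (hxc : x ≠ c) :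
    0 < 2 * x ^ (2 * μ) * (μ - (μ + 1) * x ^ 2) / x *
      (4 * x ^ (2 * μ) * x ^ 2 * (μ * (2 * μ + 1) - (μ + 1) * (2 * μ + 3) * x ^ 2)
        + 8 * μ * c ^ (2 * μ + 2)) := by
  have hgap := sq_sub_sq_mul_rpow_sub_rpow_pos hc hx hxc.symm (p := 2 * μ + 2) (by linarith)
  rw [rpow_add hx, rpow_two] at hgap
  have h₁ : μ - (μ + 1) * x ^ 2 = (μ + 1) * (c ^ 2 - x ^ 2) := by linear_combination -hcμ
  have h₂ : μ * (2 * μ + 1) - (μ + 1) * (2 * μ + 3) * x ^ 2 =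
      (μ + 1) * (2 * μ + 3) * (c ^ 2 - x ^ 2) - 2 * μ := by linear_combination -(2 * μ + 3) * hcμ
  have hsum : 0 < 4 * (μ + 1) * (2 * μ + 3) * (x ^ (2 * μ) * x ^ 2) * (c ^ 2 - x ^ 2) ^ 2
      + 8 * μ * ((c ^ 2 - x ^ 2) * (c ^ (2 * μ + 2) - x ^ (2 * μ) * x ^ 2)) :=
    add_pos_of_nonneg_of_pos (by positivity) (mul_pos (by positivity) hgap)
  rw [h₁, h₂]
  exact (mul_pos (by positivity : 0 < 2 * (μ + 1) * x ^ (2 * μ) / x) hsum).trans_eq (by ring)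

theorem sq_scaledSlope_lt_of_profile_eq {c t₁ t₂ : ℝ} (hμ : 0 < μ) (hcμ : (μ + 1) * c ^ 2 = μ)
    (h₁ : 0 < t₁) (h₁c : t₁ < c) (hc₂ : c < t₂) (heq : profile μ t₁ = profile μ t₂) :
    scaledSlope μ t₁ ^ 2 < scaledSlope μ t₂ ^ 2 := by
  have hmono : StrictMonoOn (energy μ c) (Icc t₁ t₂) :=
    strictMonoOn_Icc_of_hasDerivAt_pos_of_ne h₁c.le hc₂.le
      (fun x hx => hasDerivAt_energy μ c (h₁.trans_le hx.1))
      (fun x hx hxc => energy_deriv_pos hμ (h₁.trans h₁c) hcμ (h₁.trans_le hx.1) hxc)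
  have h₁₂ := h₁c.trans hc₂
  have := hmono (left_mem_Icc.2 h₁₂.le) (right_mem_Icc.2 h₁₂.le) h₁₂
  rw [energy, energy, heq] at this
  exact lt_of_add_lt_add_right this

end PowerProfile

theorem stmt14 (μ : ℝ) (hμ : 0 < μ) (f g : ℝ → ℝ)
    (hf : ∀ t : ℝ, f t = t ^ (2*μ) - t ^ (2*μ+2))
    (hg : ∀ t : ℝ, g t = t^2 * deriv f t)
    (tbar : ℝ) (htbar : tbar = Real.sqrt (μ/(μ+1)))
    (t₁ t₂ : ℝ) (h1 : 0 < t₁) (h2 : t₁ < tbar) (h3 : tbar < t₂)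
    (heq : f t₁ = f t₂) :
    (g t₁)^2 < (g t₂)^2 ∧ g t₁ ≠ -g t₂ := by
  have htbar_sq : (μ + 1) * tbar ^ 2 = μ := by
    rw [htbar, sq_sqrt (by positivity)]
    field_simp
  have hf_eq : f = PowerProfile.profile μ := funext hf
  have hg_eq : ∀ t, 0 < t → g t = PowerProfile.scaledSlope μ t := fun t ht => by
    rw [hg, hf_eq, PowerProfile.sq_mul_deriv_profile ht]
  have hlt : g t₁ ^ 2 < g t₂ ^ 2 := by
    rw [hg_eq t₁ h1, hg_eq t₂ (h1.trans (h2.trans h3))]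
    exact PowerProfile.sq_scaledSlope_lt_of_profile_eq hμ htbar_sq h1 h2 h3 (hf_eq ▸ heq)
  refine ⟨hlt, fun hneg => ?_⟩
  rw [hneg, neg_sq] at hlt
  exact lt_irrefl _ hlt
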